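/- The matrix Θ(u,v) is unitary: for every u ∈ ℝ and v ∈ ℂ with v ≠ 0, one has Θ(u,v)·Θ(u,v)ᴴ = I and Θ(u,v)ᴴ·Θ(u,v) = I, where ᴴ denotes the conjugate transpose. -/

import Mathlib

/-!
With `E = √(u² + |v|²)`, `t = 1 + u/E`, `s = |v|/E` and the phase `w = conj v/|v|`, the
matrix `Θ(u,v)` is `(2t)^{-1/2}` times `[[t w, s], [-s w, t]]`. Since `|w| = 1`, the columns
of the latter are orthogonal with squared length `t² + s²`, and `E² = u² + |v|²` gives
`t² + s² = 2t`, so the prefactor normalizes it to a unitary matrix.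
-/

open Matrix

/-- The diagonalizing frame `Θ(u,v)` for the potential matrix
`V(u,v) = [[u, v],[conj v, -u]]`, with `E = √(u² + |v|²)`:
`Θ(u,v) = (2(1 + u/E))^{-1/2} · [[(1 + u/E)·conj(v)/|v|, |v|/E],[-conj(v)/E, 1 + u/E]]`. -/
noncomputable def ThetaMat (u : ℝ) (v : ℂ) : Matrix (Fin 2) (Fin 2) ℂ :=
  let E : ℝ := Real.sqrt (u ^ 2 + ‖v‖ ^ 2)
  (((Real.sqrt (2 * (1 + u / E)))⁻¹ : ℝ) : ℂ) •
    !![((1 + u / E : ℝ) : ℂ) * (starRingEnd ℂ) v / ((‖v‖ : ℝ) : ℂ),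
        ((‖v‖ : ℝ) : ℂ) / ((E : ℝ) : ℂ);
       -((starRingEnd ℂ) v) / ((E : ℝ) : ℂ),
        ((1 + u / E : ℝ) : ℂ)]

open ComplexConjugate

def phaseRotation (t s : ℝ) (w : ℂ) : Matrix (Fin 2) (Fin 2) ℂ :=
  !![t * w, s; -s * w, t]

lemma conjTranspose_phaseRotation_mul_self (t s : ℝ) {w : ℂ} (hw : ‖w‖ = 1) :
    (phaseRotation t s w)ᴴ * phaseRotation t s w = ((t ^ 2 + s ^ 2 : ℝ) : ℂ) • 1 := by
  have hconj : conj w * w = 1 := by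
    rw [mul_comm, Complex.mul_conj, Complex.normSq_eq_norm_sq, hw]; norm_num
  ext i j
  fin_cases i <;> fin_cases j <;>
    simp only [phaseRotation, Matrix.mul_apply, Fin.sum_univ_two, conjTranspose_apply, of_apply,
      Fin.isValue, Fin.zero_eta, Fin.mk_one, cons_val', cons_val_zero, cons_val_one,
      cons_val_fin_one, RCLike.star_def, map_mul, map_neg, Complex.conj_ofReal, Matrix.smul_apply,
      one_apply_eq, one_apply_ne, ne_eq, zero_ne_one, one_ne_zero, not_false_eq_true, smul_eq_mul,
      mul_one, mul_zero]
  · push_cast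
    linear_combination ((t : ℂ) ^ 2 + (s : ℂ) ^ 2) * hconj
  · ring
  · ring
  · push_cast
    ring

lemma one_add_div_sq_add_div_sq {u a E : ℝ} (hE0 : E ≠ 0) (hE : E ^ 2 = u ^ 2 + a ^ 2) :
    (1 + u / E) ^ 2 + (a / E) ^ 2 = 2 * (1 + u / E) := by
  field_simp
  linear_combination -hE

lemma conjTranspose_mul_self_inv_sqrt_smul {n : Type*} [Fintype n] [DecidableEq n]
    {M : Matrix n n ℂ} {r : ℝ} (hr : 0 < r) (hM : Mᴴ * M = (r : ℂ) • 1) :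
    ((((√r)⁻¹ : ℝ) : ℂ) • M)ᴴ * ((((√r)⁻¹ : ℝ) : ℂ) • M) = 1 := by
  have hc : (√r)⁻¹ * (√r)⁻¹ * r = 1 := by
    rw [← mul_inv, Real.mul_self_sqrt hr.le, inv_mul_cancel₀ hr.ne']
  rw [conjTranspose_smul, Matrix.smul_mul, Matrix.mul_smul, hM, smul_smul, smul_smul,
    Complex.star_def, Complex.conj_ofReal, ← Complex.ofReal_mul, ← Complex.ofReal_mul, hc,
    Complex.ofReal_one, one_smul]

lemma thetaMat_eq_smul_phaseRotation (u : ℝ) {v : ℂ} (hv : v ≠ 0) :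
    let E := √(u ^ 2 + ‖v‖ ^ 2)
    ThetaMat u v =
      (((√(2 * (1 + u / E)))⁻¹ : ℝ) : ℂ) •
        phaseRotation (1 + u / E) (‖v‖ / E) (conj v / ‖v‖) := by
  intro E
  have hv' : ((‖v‖ : ℝ) : ℂ) ≠ 0 := by simpa using hv
  simp only [ThetaMat, phaseRotation]
  congr 1
  ext i j
  fin_cases i <;> fin_cases j <;>
    simp only [of_apply, Fin.isValue, Fin.zero_eta, Fin.mk_one, cons_val', cons_val_zero,
      cons_val_one, cons_val_fin_one, Complex.ofReal_add, Complex.ofReal_one, Complex.ofReal_div,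
      neg_mul, E] <;>
    field_simp

/-- The matrix `Θ(u,v)` is unitary: for every `u ∈ ℝ` and `v ∈ ℂ` with
`v ≠ 0`, one has `Θ·Θᴴ = I` and `Θᴴ·Θ = I`. -/
theorem thetaMat_unitary (u : ℝ) (v : ℂ) (hv : v ≠ 0) :
    ThetaMat u v * (ThetaMat u v)ᴴ = 1 ∧ (ThetaMat u v)ᴴ * ThetaMat u v = 1 := by
  set E := √(u ^ 2 + ‖v‖ ^ 2)
  have hE : E ^ 2 = u ^ 2 + ‖v‖ ^ 2 := Real.sq_sqrt (by positivity)
  have hw : ‖conj v / (‖v‖ : ℂ)‖ = 1 := by simp [hv]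
  have hstar_mul : (ThetaMat u v)ᴴ * ThetaMat u v = 1 := by
    rw [thetaMat_eq_smul_phaseRotation u hv,
      ← one_add_div_sq_add_div_sq (by positivity) hE]
    exact conjTranspose_mul_self_inv_sqrt_smul (by positivity)
      (conjTranspose_phaseRotation_mul_self _ _ hw)
  exact ⟨mul_eq_one_comm.mpr hstar_mul, hstar_mul⟩
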